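/- The convolution of two wrapped Cauchy densities is wrapped Cauchy: ∫_{−π}^{π} wc(θ; μ₁, ρ₁)·wc(τ−θ; μ₂, ρ₂) dθ = wc(τ; μ₁+μ₂, ρ₁ρ₂), where wc(θ; μ, ρ) = (1/2π)(1−ρ²)/(1+ρ²−2ρcos(θ−μ)). -/

import Mathlib

/-!
`2π · wc(θ; μ, ρ)` is the Poisson kernel of the unit disc at `w = ρ e^{iμ}`, evaluated at
`e^{iθ}`, so integrating `wc(·; μ₁, ρ₁)` against the boundary values of a harmonic function gives
its value at `w`. On the unit circle, `2π · wc(τ - θ; μ₂, ρ₂)` is the real part of the function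
`(1 + b z) / (1 - b z)` at `z = e^{iθ}`, where `b = ρ₂ e^{i(μ₂ - τ)}`; it is holomorphic on the
closed disc, and its value at `w` has real part `2π · wc(τ; μ₁ + μ₂, ρ₁ρ₂)`.
-/

open Real intervalIntegral

/-- The wrapped Cauchy density `WC(μ, ρ)`. -/
noncomputable def wc (θ μ ρ : ℝ) : ℝ :=
  (1 / (2 * Real.pi)) * (1 - ρ ^ 2) / (1 + ρ ^ 2 - 2 * ρ * Real.cos (θ - μ))

open Complex InnerProductSpace Metric

lemma norm_one_sub_ofReal_mul_exp_sq (ρ x : ℝ) :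
    ‖1 - ρ * cexp (x * I)‖ ^ 2 = 1 + ρ ^ 2 - 2 * ρ * Real.cos x := by
  rw [← normSq_eq_norm_sq, normSq_apply]
  simp only [sub_re, one_re, mul_re, ofReal_re, exp_ofReal_mul_I_re, ofReal_im,
    exp_ofReal_mul_I_im, zero_mul, sub_zero, sub_im, one_im, mul_im, add_zero, zero_sub, mul_neg,
    neg_mul, neg_neg]
  nlinarith [Real.sin_sq_add_cos_sq x]

lemma norm_ofReal_mul_exp (ρ x : ℝ) : ‖(ρ : ℂ) * cexp (x * I)‖ = |ρ| := by
  rw [norm_mul, norm_exp_ofReal_mul_I, Complex.norm_real, Real.norm_eq_abs, mul_one]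

lemma ofReal_mul_exp_mul_ofReal_mul_exp (a b x y : ℝ) :
    (a * cexp (x * I)) * (b * cexp (y * I)) = (a * b : ℝ) * cexp ((x + y : ℝ) * I) := by
  push_cast
  rw [add_mul, Complex.exp_add]
  ring

lemma re_one_add_div_one_sub (u : ℂ) :
    ((1 + u) / (1 - u)).re = (1 - ‖u‖ ^ 2) / ‖1 - u‖ ^ 2 := by
  have := congrFun (poissonKernel_eq_re_herglotzRieszKernel (c := 0) (w := u)) 1
  simpa [poissonKernel_def, herglotzRieszKernel_def] using this.symm

lemma wc_eq_re_one_add_div_one_sub (θ μ ρ : ℝ) :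
    wc θ μ ρ = (2 * π)⁻¹ *
      ((1 + ρ * cexp ((μ - θ : ℝ) * I)) / (1 - ρ * cexp ((μ - θ : ℝ) * I))).re := by
  rw [re_one_add_div_one_sub, norm_one_sub_ofReal_mul_exp_sq, norm_ofReal_mul_exp, sq_abs,
    ← Real.cos_neg, neg_sub, wc]
  ring

lemma wc_eq_poissonKernel (θ μ ρ : ℝ) :
    wc θ μ ρ = (2 * π)⁻¹ * poissonKernel 0 (ρ * cexp (μ * I)) (circleMap 0 1 θ) := by
  have hsub : circleMap 0 1 θ - ρ * cexp (μ * I)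
      = cexp (θ * I) * (1 - ρ * cexp ((μ - θ : ℝ) * I)) := by
    simp only [circleMap_zero, ofReal_one, one_mul, ofReal_sub, sub_mul, Complex.exp_sub]
    field_simp
  simp only [poissonKernel_def, sub_zero]
  rw [hsub, norm_ofReal_mul_exp, norm_circleMap_zero, norm_mul, norm_exp_ofReal_mul_I, one_mul,
    norm_one_sub_ofReal_mul_exp_sq, abs_one, sq_abs, ← Real.cos_neg, neg_sub, wc]
  ring

lemma harmonicOnNhd_re_one_add_div_one_sub {b : ℂ} (hb : ‖b‖ < 1) :
    HarmonicOnNhd (fun z => ((1 + b * z) / (1 - b * z)).re) (closedBall 0 1) := by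
  intro z hz
  have hbz : ‖b * z‖ < 1 := by
    rw [norm_mul]
    exact (mul_le_of_le_one_right (norm_nonneg b) (mem_closedBall_zero_iff.1 hz)).trans_lt hb
  have hne : 1 - b * z ≠ 0 := fun h => by
    rw [← sub_eq_zero.1 h, norm_one] at hbz
    exact lt_irrefl 1 hbz
  exact AnalyticAt.harmonicAt_re (by fun_prop (disch := exact hne))

theorem integral_wc_mul_of_harmonicOnNhd {f : ℂ → ℝ} (hf : HarmonicOnNhd f (closedBall 0 1))
    {μ ρ : ℝ} (hρ : |ρ| < 1) :
    ∫ θ in (-π)..π, wc θ μ ρ * f (circleMap 0 1 θ) = f (ρ * cexp (μ * I)) := by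
  set F := poissonKernel 0 (ρ * cexp (μ * I)) • f
  have hperiodic : Function.Periodic (fun θ => F (circleMap 0 1 θ)) (2 * π) :=
    (periodic_circleMap 0 1).comp F
  calc ∫ θ in (-π)..π, wc θ μ ρ * f (circleMap 0 1 θ)
      = (2 * π)⁻¹ * ∫ θ in (-π)..(-π + 2 * π), F (circleMap 0 1 θ) := by
        rw [show -π + 2 * π = π by ring, ← integral_const_mul]
        simp [F, wc_eq_poissonKernel, mul_assoc]
    _ = circleAverage F 0 1 := by
        rw [hperiodic.intervalIntegral_add_eq (-π) 0, zero_add, circleAverage_def, smul_eq_mul]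
    _ = f (ρ * cexp (μ * I)) :=
        hf.circleAverage_poissonKernel_smul (by rwa [mem_ball_zero_iff, norm_ofReal_mul_exp])

/-- The convolution of two wrapped Cauchy densities is wrapped Cauchy:
`WC(μ₁, ρ₁) * WC(μ₂, ρ₂) = WC(μ₁+μ₂, ρ₁ρ₂)`. -/
theorem wrappedCauchy_convolution (μ₁ μ₂ ρ₁ ρ₂ : ℝ)
    (hρ₁ : ρ₁ ∈ Set.Ico (0 : ℝ) 1) (hρ₂ : ρ₂ ∈ Set.Ico (0 : ℝ) 1) (τ : ℝ) :
    ∫ θ in (-Real.pi)..Real.pi, wc θ μ₁ ρ₁ * wc (τ - θ) μ₂ ρ₂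
      = wc τ (μ₁ + μ₂) (ρ₁ * ρ₂) := by
  have habs {ρ : ℝ} (hρ : ρ ∈ Set.Ico (0 : ℝ) 1) : |ρ| < 1 :=
    (abs_of_nonneg hρ.1).trans_lt hρ.2
  set b : ℂ := ρ₂ * cexp ((μ₂ - τ : ℝ) * I)
  have hb : ‖b‖ < 1 := by rw [norm_ofReal_mul_exp]; exact habs hρ₂
  have hsecond (θ : ℝ) : wc (τ - θ) μ₂ ρ₂
      = (2 * π)⁻¹ * ((1 + b * circleMap 0 1 θ) / (1 - b * circleMap 0 1 θ)).re := by
    rw [circleMap_zero, ofReal_mul_exp_mul_ofReal_mul_exp, mul_one,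
      show μ₂ - τ + θ = μ₂ - (τ - θ) by ring, wc_eq_re_one_add_div_one_sub]
  simp_rw [hsecond, mul_left_comm _ (2 * π)⁻¹, integral_const_mul]
  rw [integral_wc_mul_of_harmonicOnNhd (harmonicOnNhd_re_one_add_div_one_sub hb)
    (habs hρ₁), ofReal_mul_exp_mul_ofReal_mul_exp, mul_comm ρ₂,
    show μ₂ - τ + μ₁ = μ₁ + μ₂ - τ by ring, wc_eq_re_one_add_div_one_sub]
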